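/- For all real numbers a > 0, b > 0 and every real γ, the integral ∫₀¹ e^{γx} · x^{a-1} · (1-x)^{b-1} dx equals B(a,b) · (1 + Σ_{m=1}^∞ (a)_m γ^m / ((a+b)_m · m!)), where B(a,b) = Γ(a)Γ(b)/Γ(a+b) is the Beta function. In particular the integral is finite and the series on the right converges. -/

import Mathlib

open scoped BigOperators

/-- The real Pochhammer symbol `(a)_m = a (a+1) ⋯ (a+m-1)`. -/
noncomputable def pochR (a : ℝ) (m : ℕ) : ℝ := (ascPochhammer ℝ m).eval a

/-- The real Beta function `B(a,b) = Γ(a)Γ(b)/Γ(a+b)`. -/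
noncomputable def betaR (a b : ℝ) : ℝ := Real.Gamma a * Real.Gamma b / Real.Gamma (a + b)

/-! Expand `e^{γx}` in its power series. The partial sums are dominated by
`e^{|γ|} x^{a-1} (1-x)^{b-1}`, which is integrable on `(0,1)`, so the series may be integrated
term by term. The `m`-th term is `γ^m / m!` times the Beta integral `B(a+m, b)`, and
`Γ(s+1) = s Γ(s)` gives `B(a+m, b) = B(a,b) (a)_m / (a+b)_m`. -/

open MeasureTheory Real Set
open scoped Nat

lemma pochR_zero (a : ℝ) : pochR a 0 = 1 := by simp [pochR]

lemma pochR_succ (a : ℝ) (m : ℕ) : pochR a (m + 1) = pochR a m * (a + m) := by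
  simp [pochR, ascPochhammer_succ_right]

lemma pochR_pos {a : ℝ} (ha : 0 < a) (m : ℕ) : 0 < pochR a m := ascPochhammer_pos m a ha

lemma Real.Gamma_add_nat_eq_mul_pochR {a : ℝ} (ha : 0 < a) (m : ℕ) :
    Gamma (a + m) = Gamma a * pochR a m := by
  induction m with
  | zero => simp [pochR_zero]
  | succ m ih =>
    rw [Nat.cast_succ, ← add_assoc, Gamma_add_one (by positivity), ih, pochR_succ]
    ring

lemma betaR_pos {a b : ℝ} (ha : 0 < a) (hb : 0 < b) : 0 < betaR a b :=
  ProbabilityTheory.beta_pos ha hb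

lemma betaR_add_nat {a b : ℝ} (ha : 0 < a) (hab : 0 < a + b) (m : ℕ) :
    betaR (a + m) b = betaR a b * pochR a m / pochR (a + b) m := by
  rw [betaR, betaR, add_right_comm, Gamma_add_nat_eq_mul_pochR ha,
    Gamma_add_nat_eq_mul_pochR hab]
  have := (Gamma_pos_of_pos hab).ne'
  have := (pochR_pos hab m).ne'
  field_simp

lemma ofReal_beta_kernel (a b : ℝ) {x : ℝ} (hx : x ∈ Icc (0 : ℝ) 1) :
    ((x ^ (a - 1) * (1 - x) ^ (b - 1) : ℝ) : ℂ) =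
      (x : ℂ) ^ ((a : ℂ) - 1) * (1 - (x : ℂ)) ^ ((b : ℂ) - 1) := by
  rw [Complex.ofReal_mul, Complex.ofReal_cpow hx.1, Complex.ofReal_cpow (by linarith [hx.2])]
  push_cast
  rfl

lemma intervalIntegral_ofReal_beta_kernel (a b : ℝ) :
    ∫ x in (0 : ℝ)..1, ((x ^ (a - 1) * (1 - x) ^ (b - 1) : ℝ) : ℂ) = Complex.betaIntegral a b :=
  intervalIntegral.integral_congr fun _ hx ↦
    ofReal_beta_kernel a b (by rwa [uIcc_of_le zero_le_one] at hx)

lemma integrableOn_beta_kernel {a b : ℝ} (ha : 0 < a) (hb : 0 < b) :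
    IntegrableOn (fun x : ℝ ↦ x ^ (a - 1) * (1 - x) ^ (b - 1)) (Ioo 0 1) := by
  have hC : IntervalIntegrable (fun x : ℝ ↦ ((x ^ (a - 1) * (1 - x) ^ (b - 1) : ℝ) : ℂ))
      volume 0 1 :=
    (Complex.betaIntegral_convergent (u := a) (v := b) (by simpa) (by simpa)).congr fun x hx ↦ by
      rw [uIoc_of_le zero_le_one] at hx
      exact (ofReal_beta_kernel a b ⟨hx.1.le, hx.2⟩).symm
  rw [intervalIntegrable_iff_integrableOn_Ioc_of_le zero_le_one] at hC
  have hRe : IntegrableOn (fun x : ℝ ↦ x ^ (a - 1) * (1 - x) ^ (b - 1)) (Ioc 0 1) := by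
    simpa [IntegrableOn] using hC.re
  exact hRe.mono_set Ioo_subset_Ioc_self

lemma integral_beta_kernel {a b : ℝ} (ha : 0 < a) (hb : 0 < b) :
    ∫ x in Ioo (0 : ℝ) 1, x ^ (a - 1) * (1 - x) ^ (b - 1) = betaR a b := by
  apply Complex.ofReal_injective
  rw [← integral_Ioc_eq_integral_Ioo, ← intervalIntegral.integral_of_le zero_le_one,
    ← intervalIntegral.integral_ofReal, intervalIntegral_ofReal_beta_kernel,
    Complex.betaIntegral_eq_Gamma_mul_div _ _ (by simpa) (by simpa), betaR]
  rw [← Complex.ofReal_add]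
  simp only [Complex.Gamma_ofReal]
  push_cast
  rfl

lemma integral_pow_mul_beta_kernel {a b : ℝ} (ha : 0 < a) (hb : 0 < b) (m : ℕ) :
    ∫ x in Ioo (0 : ℝ) 1, x ^ m * (x ^ (a - 1) * (1 - x) ^ (b - 1)) =
      betaR a b * pochR a m / pochR (a + b) m := by
  have hshift : ∀ x ∈ Ioo (0 : ℝ) 1, x ^ m * (x ^ (a - 1) * (1 - x) ^ (b - 1)) =
      x ^ (a + m - 1) * (1 - x) ^ (b - 1) := fun x hx ↦ by
    rw [← mul_assoc, ← rpow_natCast, ← rpow_add hx.1]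
    ring_nf
  rw [setIntegral_congr_fun measurableSet_Ioo hshift, integral_beta_kernel (by positivity) hb,
    betaR_add_nat ha (add_pos ha hb)]

section ExpMoments

variable {μ : Measure ℝ} {g : ℝ → ℝ} {R : ℝ}

lemma integrable_exp_mul (hg : Integrable g μ) (hR : ∀ᵐ x ∂μ, |x| ≤ R) (γ : ℝ) :
    Integrable (fun x ↦ exp (γ * x) * g x) μ := by
  refine hg.bdd_mul (c := exp (|γ| * R)) (by fun_prop) ?_
  filter_upwards [hR] with x hx
  rw [norm_of_nonneg (exp_pos _).le, exp_le_exp]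
  calc γ * x ≤ |γ| * |x| := (le_abs_self _).trans (abs_mul γ x).le
    _ ≤ |γ| * R := mul_le_mul_of_nonneg_left hx (abs_nonneg γ)

/-- Dominated convergence, with bound `exp (|γ| R) * ‖g‖`. -/
theorem hasSum_integral_exp_mul (hg : Integrable g μ) (hR : ∀ᵐ x ∂μ, |x| ≤ R) (γ : ℝ) :
    HasSum (fun m : ℕ ↦ γ ^ m / m ! * ∫ x, x ^ m * g x ∂μ) (∫ x, exp (γ * x) * g x ∂μ) := by
  have hexp (c : ℝ) : HasSum (fun m : ℕ ↦ c ^ m / m !) (exp c) := by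
    rw [exp_eq_exp_ℝ]
    exact NormedSpace.expSeries_div_hasSum_exp c
  have hg_meas := hg.aestronglyMeasurable
  have key := hasSum_integral_of_dominated_convergence (μ := μ)
    (F := fun (m : ℕ) x ↦ γ ^ m / m ! * (x ^ m * g x)) (f := fun x ↦ exp (γ * x) * g x)
    (fun m x ↦ (|γ| * R) ^ m / m ! * ‖g x‖) (fun m ↦ by fun_prop) (fun m ↦ ?_)
    (ae_of_all _ fun x ↦ (hexp _).summable.mul_right _) ?_ (ae_of_all _ fun x ↦ ?_)
  · simpa only [integral_const_mul] using key
  · filter_upwards [hR] with x hx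
    rw [norm_mul, norm_mul, norm_div, norm_pow, norm_pow, RCLike.norm_natCast, ← mul_assoc,
      div_mul_eq_mul_div, ← mul_pow]
    gcongr
    · exact (norm_eq_abs γ).le
    · exact hx
  · simp_rw [tsum_mul_right, (hexp _).tsum_eq]
    exact hg.norm.const_mul _
  · have hterm (m : ℕ) : γ ^ m / m ! * (x ^ m * g x) = (γ * x) ^ m / m ! * g x := by ring
    simpa only [hterm] using (hexp (γ * x)).mul_right (g x)

end ExpMoments

/-- For `a, b > 0` and any real `γ`,
`∫₀¹ e^{γx} x^{a-1} (1-x)^{b-1} dx = B(a,b) (1 + Σ_{m≥1} (a)_m γ^m /((a+b)_m m!))`;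
in particular the integral is finite and the series converges. -/
theorem integral_exp_mul_beta_kernel (a b γ : ℝ) (ha : 0 < a) (hb : 0 < b) :
    MeasureTheory.IntegrableOn
      (fun x : ℝ => Real.exp (γ * x) * x ^ (a - 1) * (1 - x) ^ (b - 1))
      (Set.Ioo 0 1) ∧
    Summable (fun m : ℕ =>
      pochR a (m + 1) * γ ^ (m + 1) /
        (pochR (a + b) (m + 1) * (Nat.factorial (m + 1)))) ∧
    ∫ x in Set.Ioo (0 : ℝ) 1,
        Real.exp (γ * x) * x ^ (a - 1) * (1 - x) ^ (b - 1) =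
      betaR a b *
        (1 + ∑' m : ℕ,
          pochR a (m + 1) * γ ^ (m + 1) /
            (pochR (a + b) (m + 1) * (Nat.factorial (m + 1)))) := by
  set T : ℕ → ℝ := fun m ↦ pochR a m * γ ^ m / (pochR (a + b) m * m !)
  have hker := integrableOn_beta_kernel ha hb
  have hbound : ∀ᵐ x ∂(volume.restrict (Ioo (0 : ℝ) 1)), |x| ≤ 1 :=
    ae_restrict_of_forall_mem measurableSet_Ioo fun x hx ↦ abs_le.mpr ⟨by linarith [hx.1], hx.2.le⟩
  have hsum : HasSum (fun m ↦ betaR a b * T m)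
      (∫ x in Ioo 0 1, exp (γ * x) * (x ^ (a - 1) * (1 - x) ^ (b - 1))) := by
    convert hasSum_integral_exp_mul hker hbound γ using 2 with m
    rw [integral_pow_mul_beta_kernel ha hb]
    simp only [T]
    have := (pochR_pos (add_pos ha hb) m).ne'
    field_simp
  have hT : Summable T := (summable_mul_left_iff (betaR_pos ha hb).ne').mp hsum.summable
  simp only [mul_assoc]
  refine ⟨integrable_exp_mul hker hbound γ, (summable_nat_add_iff 1).mpr hT, ?_⟩
  rw [← hsum.tsum_eq, tsum_mul_left, hT.tsum_eq_zero_add]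
  simp [T, pochR_zero]
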